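/- arXiv:2211.03194 — 6 statements merged into one kernel-verified Lean document; each statement's English description precedes it below -/
import Mathlib

section
/- Consider the elastic-demand instance with effective walk-delay operator Ψ and inverse demand functions Θ_i, and construct the extended fixed-volume instance: for each i ∈ I add a new walk p̃_i, set 𝒫'_i := 𝒫_i ∪ {p̃_i} and 𝒫' := ⋃_i 𝒫'_i, choose B_{p̃_i} ≥ 0 with B_{p̃_i}·(t_f − t₀) > Q_i, and define Ψ' on walk inflows h' indexed by 𝒫' by Ψ'_p(h',t) := Ψ_p((h'_w)_{w∈𝒫},t) for p ∈ 𝒫 and Ψ'_{p̃_i}(h',t) := Θ_i(Σ_{p∈𝒫_i} ∫_{t₀}^{t_f} h'_p(t')dt'). Then: (i) if h' ∈ Λ'(Q) (the fixed-volume feasible set for the extended instance) is a dynamic equilibrium with fixed flow volumes and departure time choice w.r.t. Ψ', then, setting Q*_i := Σ_{p∈𝒫_i} ∫_{t₀}^{t_f} h'_p(t)dt and h* := (h'_p)_{p∈𝒫}, the pair (h*,Q*) is a dynamic equilibrium with elastic demands and departure time choice w.r.t. Ψ and Θ; and (ii) conversely, if (h*,Q*) is a dynamic equilibrium with elastic demands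 and departure time choice, then the extension h' of h* defined by h'_{p̃_i}(t) := (Q_i − Q*_i)/(t_f − t₀) for all t ∈ [t₀,t_f] is a dynamic equilibrium with fixed flow volumes and departure time choice in the extended instance. -/
open MeasureTheory Filter Set

noncomputable section

/-- The restriction of the Lebesgue measure to the planning horizon `[t₀, t_f]`. -/
def horizonMeasure (t0 tf : ℝ) : Measure ℝ := volume.restrict (Icc t0 tf)

/-- `f` is (a representative of) a nonnegative square-integrable function on `[t₀, t_f]`,
i.e. an element of `L²₊([t₀,t_f])`. -/
def L2nonneg (t0 tf : ℝ) (f : ℝ → ℝ) : Prop :=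
  MemLp f 2 (horizonMeasure t0 tf) ∧ 0 ≤ᵐ[horizonMeasure t0 tf] f

/-- A walk inflow: a vector of nonnegative L² functions on the horizon, one per walk. -/
def WalkInflow {P : Type*} (t0 tf : ℝ) (h : P → ℝ → ℝ) : Prop := ∀ p, L2nonneg t0 tf (h p)

variable {I P E : Type*}

/-- The (finite) set of walks belonging to commodity `i`. -/
def commWalks [Fintype P] [DecidableEq I] (comm : P → I) (i : I) : Finset P :=
  Finset.univ.filter fun p => comm p = i

/-- The set `Λ(Q)` of feasible walk inflows for fixed flow volumes `Q` with
inflow bounds `B`. -/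
def LambdaQ [Fintype P] [DecidableEq I] (t0 tf : ℝ) (comm : P → I) (B : P → ℝ)
    (Q : I → ℝ) : Set (P → ℝ → ℝ) :=
  {h | WalkInflow t0 tf h ∧
    (∀ i, ∑ p ∈ commWalks comm i, ∫ t, h p t ∂(horizonMeasure t0 tf) = Q i) ∧
    ∀ p, ∀ᵐ t ∂(horizonMeasure t0 tf), h p t ≤ B p}

/-- The set `Λ(r)` of feasible walk inflows for fixed network inflow rates `r`. -/
def LambdaR [Fintype P] [DecidableEq I] (t0 tf : ℝ) (comm : P → I)
    (r : I → ℝ → ℝ) : Set (P → ℝ → ℝ) :=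
  {h | WalkInflow t0 tf h ∧
    ∀ i, ∀ᵐ t ∂(horizonMeasure t0 tf), ∑ p ∈ commWalks comm i, h p t = r i t}

/-- The canonical scalar product `⟨f,g⟩ = Σ_p ∫ f_p(t) g_p(t) dt` on `L²([t₀,t_f])^𝒫`. -/
def inner2 [Fintype P] (t0 tf : ℝ) (f g : P → ℝ → ℝ) : ℝ :=
  ∑ p : P, ∫ t, f p t * g p t ∂(horizonMeasure t0 tf)

/-- Weak convergence of a sequence of walk inflows. -/
def WeakConvTo [Fintype P] (t0 tf : ℝ) (hn : ℕ → P → ℝ → ℝ) (h : P → ℝ → ℝ) : Prop :=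
  ∀ g : P → ℝ → ℝ, (∀ p, MemLp (g p) 2 (horizonMeasure t0 tf)) →
    Tendsto (fun n => inner2 t0 tf (hn n) g) atTop (nhds (inner2 t0 tf h g))

/-- Convergence in `L²`-norm on the horizon. -/
def L2Tendsto (t0 tf : ℝ) (fn : ℕ → ℝ → ℝ) (f : ℝ → ℝ) : Prop :=
  Tendsto (fun n => eLpNorm (fun t => fn n t - f t) 2 (horizonMeasure t0 tf)) atTop (nhds 0)

/-- Dynamic equilibrium with fixed inflow rates. -/
def IsDEFixedRates [Fintype P] [DecidableEq I] (t0 tf : ℝ) (comm : P → I) (r : I → ℝ → ℝ)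
    (Psi : (P → ℝ → ℝ) → P → ℝ → ℝ) (h : P → ℝ → ℝ) : Prop :=
  h ∈ LambdaR t0 tf comm r ∧
    ∀ p q, comm p = comm q →
      ∀ᵐ t ∂(horizonMeasure t0 tf), 0 < h p t → Psi h p t ≤ Psi h q t

/-- Dynamic equilibrium with fixed flow volumes and departure time choice. -/
def IsDEFixedVolume [Fintype P] [DecidableEq I] (t0 tf : ℝ) (comm : P → I) (B : P → ℝ)
    (Q : I → ℝ) (Psi : (P → ℝ → ℝ) → P → ℝ → ℝ) (h : P → ℝ → ℝ) : Prop :=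
  h ∈ LambdaQ t0 tf comm B Q ∧
    ∀ i, ∃ ν : ℝ, ∀ p, comm p = i →
      ∀ᵐ t ∂(horizonMeasure t0 tf),
        (0 < h p t → Psi h p t ≤ ν) ∧ (h p t < B p → ν ≤ Psi h p t)

/-- Dynamic equilibrium with elastic demands and departure time choice. -/
def IsDEElastic [Fintype P] [DecidableEq I] (t0 tf : ℝ) (comm : P → I) (B : P → ℝ)
    (Q : I → ℝ) (Psi : (P → ℝ → ℝ) → P → ℝ → ℝ) (Θ : I → ℝ → ℝ)
    (h : P → ℝ → ℝ) (Qstar : I → ℝ) : Prop :=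
  (∀ i, 0 ≤ Qstar i ∧ Qstar i ≤ Q i) ∧
  h ∈ LambdaQ t0 tf comm B Qstar ∧
  ∀ i, ∃ ν : ℝ,
    (∀ p, comm p = i → ∀ᵐ t ∂(horizonMeasure t0 tf),
      (0 < h p t → Psi h p t ≤ ν) ∧ (h p t < B p → ν ≤ Psi h p t)) ∧
    (Qstar i < Q i → ν = Θ i (Qstar i)) ∧
    (Qstar i = Q i → ν ≤ Θ i (Q i))

/-- The effective walk-delay operator of the extended (fixed-volume) instance obtained from an
elastic-demand instance: on original walks it is `Ψ`, on the new walk `p̃ᵢ` it is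
`Θᵢ` of the total volume of commodity `i` on its original walks. -/
def PsiExt [Fintype P] [DecidableEq I] (t0 tf : ℝ) (comm : P → I)
    (Psi : (P → ℝ → ℝ) → P → ℝ → ℝ) (Θ : I → ℝ → ℝ) :
    (P ⊕ I → ℝ → ℝ) → P ⊕ I → ℝ → ℝ := fun h' w t =>
  match w with
  | Sum.inl p => Psi (fun q => h' (Sum.inl q)) p t
  | Sum.inr i =>
      Θ i (∑ p ∈ commWalks comm i, ∫ s, h' (Sum.inl p) s ∂(horizonMeasure t0 tf))

/-! ## Side-constrained equilibria -/

/-- The basic requirements on an admissible γ-deviation `(q,γ,Δ)` from walk `p` at inflow `h`: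
`q` belongs to the same commodity as `p`, `γ ∈ L²₊([t₀,t_f])`, `γ ≤ h_p` a.e.,
`h_q(t) + γ(t−Δ) ≤ B_q` a.e., and the support of `γ(·−Δ)` is contained in `[t₀,t_f]`
up to a null set. -/
def ValidTriple (t0 tf : ℝ) (comm : P → I) (B : P → ℝ) (h : P → ℝ → ℝ)
    (p q : P) (γ : ℝ → ℝ) (Δ : ℝ) : Prop :=
  comm q = comm p ∧ L2nonneg t0 tf γ ∧
  (∀ᵐ t ∂(horizonMeasure t0 tf), γ t ≤ h p t) ∧
  (∀ᵐ t ∂(horizonMeasure t0 tf), h q t + γ (t - Δ) ≤ B q) ∧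
  (∀ᵐ t ∂(volume : Measure ℝ), γ (t - Δ) ≠ 0 → t ∈ Icc t0 tf)

/-- The set `U_p(h,t)` of admissible deviations `(q,Δ)` for walk `p` at time `t` under the
inflow `h`, given the correspondence `A` of admissible γ-deviations. -/
def UDev (t0 tf : ℝ) (A : (P → ℝ → ℝ) → P → Set (P × (ℝ → ℝ) × ℝ))
    (h : P → ℝ → ℝ) (p : P) (t : ℝ) : Set (P × ℝ) :=
  {qd | ∀ δ > (0:ℝ), ∀ ε > (0:ℝ), ∃ γ : ℝ → ℝ,
    L2nonneg t0 tf γ ∧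
    0 < ∫ s, γ s ∂(horizonMeasure t0 tf) ∧
    (∀ᵐ s ∂(horizonMeasure t0 tf), γ s ≤ ε) ∧
    (∀ᵐ s ∂(horizonMeasure t0 tf), γ s ≠ 0 → s ∈ Icc (t - δ) (t + δ)) ∧
    (qd.1, γ, qd.2) ∈ A h p}

/-- Side-constrained dynamic equilibrium (SCDE) w.r.t. the effective walk-delay operator
`Psi` (valued in a preorder, e.g. `ℝ` or `ℝ ∪ {∞}`), the constraint set `S` and the
correspondences `A` of admissible γ-deviations. -/
def IsSCDE {α : Type*} [Preorder α] (t0 tf : ℝ)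
    (Psi : (P → ℝ → ℝ) → P → ℝ → α) (S : Set (P → ℝ → ℝ))
    (A : (P → ℝ → ℝ) → P → Set (P × (ℝ → ℝ) × ℝ)) (h : P → ℝ → ℝ) : Prop :=
  h ∈ S ∧ ∀ p, ∀ t ∈ Icc t0 tf, ∀ q Δ, (q, Δ) ∈ UDev t0 tf A h p t →
    Psi h p t ≤ Psi h q (t + Δ)

/-- The walk inflow `H_{p→q}(h,γ,Δ)` obtained from `h` by the γ-deviation `(q,γ,Δ)`
from walk `p`. -/
def Hshift [DecidableEq P] (h : P → ℝ → ℝ) (p q : P) (γ : ℝ → ℝ) (Δ : ℝ) :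
    P → ℝ → ℝ := fun w t =>
  h w t + (if w = q then γ (t - Δ) else 0) - (if w = p then γ t else 0)

/-- The set `M(h)` of all walk inflows reachable from `h` by a single admissible
γ-deviation. -/
def MSet [DecidableEq P] (A : (P → ℝ → ℝ) → P → Set (P × (ℝ → ℝ) × ℝ))
    (h : P → ℝ → ℝ) : Set (P → ℝ → ℝ) :=
  {h' | ∃ p q γ Δ, (q, γ, Δ) ∈ A h p ∧ h' = Hshift h p q γ Δ}

/-- The tangent cone `T(A_p,h)` at `h` w.r.t. the correspondences `A`. -/
def TangentCone [Fintype P] [DecidableEq P] (t0 tf : ℝ)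
    (A : (P → ℝ → ℝ) → P → Set (P × (ℝ → ℝ) × ℝ)) (h : P → ℝ → ℝ) :
    Set (P → ℝ → ℝ) :=
  {v | (∀ p, MemLp (v p) 2 (horizonMeasure t0 tf)) ∧
    ∃ (hn : ℕ → P → ℝ → ℝ) (tn : ℕ → ℝ),
      (∀ n, hn n ∈ MSet A h) ∧ (∀ n, 0 < tn n) ∧
      Tendsto tn atTop (nhds 0) ∧
      ∀ p, Tendsto
        (fun n => eLpNorm (fun t => (hn n p t - h p t) / tn n - v p t) 2
          (horizonMeasure t0 tf)) atTop (nhds 0)}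

/-- The correspondences `A` are closed under rate-reduction at `h`. -/
def ClosedRateReduction (A : (P → ℝ → ℝ) → P → Set (P × (ℝ → ℝ) × ℝ))
    (h : P → ℝ → ℝ) : Prop :=
  ∀ p q γ Δ, (q, γ, Δ) ∈ A h p → ∀ lam ∈ Icc (0:ℝ) 1,
    (q, fun t => lam * γ t, Δ) ∈ A h p

/-- The correspondences `A` are closed under time-restriction at `h`. -/
def ClosedTimeRestriction (A : (P → ℝ → ℝ) → P → Set (P × (ℝ → ℝ) × ℝ))
    (h : P → ℝ → ℝ) : Prop :=
  ∀ p q γ Δ, (q, γ, Δ) ∈ A h p → ∀ J : Set ℝ, MeasurableSet J →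
    (q, J.indicator γ, Δ) ∈ A h p

/-- `S` is closed with respect to elementary directions (w.r.t. the correspondences `A`). -/
def ClosedElemDir (t0 tf : ℝ) (comm : P → I) (S : Set (P → ℝ → ℝ))
    (A : (P → ℝ → ℝ) → P → Set (P × (ℝ → ℝ) × ℝ)) : Prop :=
  ∀ h ∈ S, ∀ h' ∈ S, ∀ p q, comm p = comm q →
    ∀ J : Set ℝ, J ⊆ Icc t0 tf → MeasurableSet J → 0 < volume J →
      (∀ t ∈ J, h' p t < h p t ∧ h q t < h' q t) →
      ∃ t ∈ J, (q, (0:ℝ)) ∈ UDev t0 tf A h p t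

/-! ## Edge-load constraints and network loading -/

/-- The edge-load feasibility set `S = {h ∈ Λ(Q) : f_e(h,θ) ≤ c_e(θ) for all e and θ ≥ 0}`. -/
def SEdge [Fintype P] [DecidableEq I] (t0 tf : ℝ) (comm : P → I) (B : P → ℝ) (Q : I → ℝ)
    (f : (P → ℝ → ℝ) → E → ℝ → ℝ) (c : E → ℝ → ℝ) : Set (P → ℝ → ℝ) :=
  {h | h ∈ LambdaQ t0 tf comm B Q ∧ ∀ e θ, 0 ≤ θ → f h e θ ≤ c e θ}

/-- Strong LP-deviations: admissible γ-deviations whose alternative walk is strictly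
unsaturated at every entrance time. -/
def AsLP (t0 tf : ℝ) (comm : P → I) (B : P → ℝ)
    (len : P → ℕ) (edgeOf : P → ℕ → E)
    (τ : (P → ℝ → ℝ) → P → ℕ → ℝ → ℝ)
    (f : (P → ℝ → ℝ) → E → ℝ → ℝ) (c : E → ℝ → ℝ)
    (h : P → ℝ → ℝ) (p : P) : Set (P × (ℝ → ℝ) × ℝ) :=
  {d | ValidTriple t0 tf comm B h p d.1 d.2.1 d.2.2 ∧
    ∃ γ₀ : ℝ → ℝ, γ₀ =ᵐ[horizonMeasure t0 tf] d.2.1 ∧ (∀ s, s ∉ Icc t0 tf → γ₀ s = 0) ∧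
      ∀ t, γ₀ (t - d.2.2) ≠ 0 → ∀ j, 1 ≤ j → j ≤ len d.1 →
        f h (edgeOf d.1 j) (τ h d.1 j t) < c (edgeOf d.1 j) (τ h d.1 j t)}

/-- Weak LP-deviations: admissible γ-deviations whose alternative walk is strictly
unsaturated during the whole traversal of each of its edges. -/
def AwLP (t0 tf : ℝ) (comm : P → I) (B : P → ℝ)
    (len : P → ℕ) (edgeOf : P → ℕ → E)
    (τ : (P → ℝ → ℝ) → P → ℕ → ℝ → ℝ)
    (f : (P → ℝ → ℝ) → E → ℝ → ℝ) (c : E → ℝ → ℝ)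
    (h : P → ℝ → ℝ) (p : P) : Set (P × (ℝ → ℝ) × ℝ) :=
  {d | ValidTriple t0 tf comm B h p d.1 d.2.1 d.2.2 ∧
    ∃ γ₀ : ℝ → ℝ, γ₀ =ᵐ[horizonMeasure t0 tf] d.2.1 ∧ (∀ s, s ∉ Icc t0 tf → γ₀ s = 0) ∧
      ∀ t, γ₀ (t - d.2.2) ≠ 0 → ∀ j, 1 ≤ j → j ≤ len d.1 →
        ∀ θ ∈ Icc (τ h d.1 j t) (τ h d.1 (j+1) t),
          f h (edgeOf d.1 j) θ < c (edgeOf d.1 j) θ}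

/-- Strong MNS-deviations: strong LP-deviations together with deviations without time
shift whose alternative walk is strictly unsaturated (at entrance times) outside a common
prefix with the original walk. -/
def AsMNS (t0 tf : ℝ) (comm : P → I) (B : P → ℝ)
    (len : P → ℕ) (edgeOf : P → ℕ → E)
    (τ : (P → ℝ → ℝ) → P → ℕ → ℝ → ℝ)
    (f : (P → ℝ → ℝ) → E → ℝ → ℝ) (c : E → ℝ → ℝ)
    (h : P → ℝ → ℝ) (p : P) : Set (P × (ℝ → ℝ) × ℝ) :=
  AsLP t0 tf comm B len edgeOf τ f c h p ∪
  {d | d.2.2 = 0 ∧ ValidTriple t0 tf comm B h p d.1 d.2.1 d.2.2 ∧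
    ∃ k, k ≤ len p ∧ k ≤ len d.1 ∧ (∀ j, 1 ≤ j → j ≤ k → edgeOf p j = edgeOf d.1 j) ∧
      ∃ γ₀ : ℝ → ℝ, γ₀ =ᵐ[horizonMeasure t0 tf] d.2.1 ∧ (∀ s, s ∉ Icc t0 tf → γ₀ s = 0) ∧
        ∀ t, γ₀ t ≠ 0 → ∀ j, k < j → j ≤ len d.1 →
          f h (edgeOf d.1 j) (τ h d.1 j t) < c (edgeOf d.1 j) (τ h d.1 j t)}

/-- Weak MNS-deviations: weak LP-deviations together with deviations without time shift
whose alternative walk is strictly unsaturated (during edge traversal) outside a common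
prefix with the original walk. -/
def AwMNS (t0 tf : ℝ) (comm : P → I) (B : P → ℝ)
    (len : P → ℕ) (edgeOf : P → ℕ → E)
    (τ : (P → ℝ → ℝ) → P → ℕ → ℝ → ℝ)
    (f : (P → ℝ → ℝ) → E → ℝ → ℝ) (c : E → ℝ → ℝ)
    (h : P → ℝ → ℝ) (p : P) : Set (P × (ℝ → ℝ) × ℝ) :=
  AwLP t0 tf comm B len edgeOf τ f c h p ∪
  {d | d.2.2 = 0 ∧ ValidTriple t0 tf comm B h p d.1 d.2.1 d.2.2 ∧
    ∃ k, k ≤ len p ∧ k ≤ len d.1 ∧ (∀ j, 1 ≤ j → j ≤ k → edgeOf p j = edgeOf d.1 j) ∧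
      ∃ γ₀ : ℝ → ℝ, γ₀ =ᵐ[horizonMeasure t0 tf] d.2.1 ∧ (∀ s, s ∉ Icc t0 tf → γ₀ s = 0) ∧
        ∀ t, γ₀ t ≠ 0 → ∀ j, k < j → j ≤ len d.1 →
          ∀ θ ∈ Icc (τ h d.1 j t) (τ h d.1 (j+1) t),
            f h (edgeOf d.1 j) θ < c (edgeOf d.1 j) θ}

/-
The new walk `p̃ᵢ` carries the unserved demand `Qᵢ − Q*ᵢ` and has delay `Θᵢ(Q*ᵢ)`.
Since `B_{p̃ᵢ}(t_f − t₀) > Qᵢ`, it cannot be saturated on the whole horizon, so the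
fixed-volume condition on `p̃ᵢ` always gives `νᵢ ≤ Θᵢ(Q*ᵢ)`; it is used with positive volume
exactly when `Q*ᵢ < Qᵢ`, and then also `Θᵢ(Q*ᵢ) ≤ νᵢ`. This pair of conditions is an
equivalent form of the elastic-demand complementarity conditions on `νᵢ`.
-/

theorem prop_of_ae_pos_imp_of_integral_ne_zero {α : Type*} [MeasurableSpace α]
    {μ : Measure α} {f : α → ℝ} {p : Prop} (hf : 0 ≤ᵐ[μ] f) (hint : ∫ x, f x ∂μ ≠ 0)
    (h : ∀ᵐ x ∂μ, 0 < f x → p) : p := by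
  by_contra hp
  refine hint (integral_eq_zero_of_ae ?_)
  filter_upwards [hf, h] with x hx hpx
  exact le_antisymm (not_lt.1 (mt hpx hp)) hx

theorem prop_of_ae_lt_imp_of_integral_ne {α : Type*} [MeasurableSpace α]
    {μ : Measure α} {f : α → ℝ} {b : ℝ} {p : Prop} (hf : ∀ᵐ x ∂μ, f x ≤ b)
    (hint : ∫ x, f x ∂μ ≠ μ.real univ * b) (h : ∀ᵐ x ∂μ, f x < b → p) : p := by
  by_contra hp
  refine hint ?_
  rw [← smul_eq_mul, ← integral_const]
  refine integral_congr_ae ?_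
  filter_upwards [hf, h] with x hx hpx
  exact le_antisymm hx (not_lt.1 (mt hpx hp))

theorem elastic_price_iff {Qs Q ν : ℝ} {θ : ℝ → ℝ} (hQs : Qs ≤ Q) :
    ((Qs < Q → ν = θ Qs) ∧ (Qs = Q → ν ≤ θ Q)) ↔ ν ≤ θ Qs ∧ (Qs < Q → θ Qs ≤ ν) := by
  rcases hQs.lt_or_eq with hlt | rfl
  · simp [hlt, hlt.ne, le_antisymm_iff]
  · simp

instance (t0 tf : ℝ) : IsFiniteMeasure (horizonMeasure t0 tf) := by
  unfold horizonMeasure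
  infer_instance

theorem horizonMeasure_real_univ {t0 tf : ℝ} (h : t0 ≤ tf) :
    (horizonMeasure t0 tf).real univ = tf - t0 := by
  simp [horizonMeasure, measureReal_def, Real.volume_Icc, h]

section ExtendedInstance

variable {I P : Type*} [Fintype P] [DecidableEq I] {t0 tf : ℝ} {comm : P → I}
  {B : P → ℝ} {Q : I → ℝ} {Psi : (P → ℝ → ℝ) → P → ℝ → ℝ} {Θ : I → ℝ → ℝ} {Btil : I → ℝ}

def commVolume (t0 tf : ℝ) (comm : P → I) (h : P → ℝ → ℝ) (i : I) : ℝ :=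
  ∑ p ∈ commWalks comm i, ∫ t, h p t ∂(horizonMeasure t0 tf)

theorem eq_commVolume_of_mem_LambdaQ {h : P → ℝ → ℝ} {Qs : I → ℝ}
    (hh : h ∈ LambdaQ t0 tf comm B Qs) : Qs = commVolume t0 tf comm h :=
  funext fun i => (hh.2.1 i).symm

theorem commVolume_nonneg {h : P → ℝ → ℝ} (hh : WalkInflow t0 tf h) (i : I) :
    0 ≤ commVolume t0 tf comm h i :=
  Finset.sum_nonneg fun p _ => integral_nonneg_of_ae (hh p).2

theorem sum_commWalks_sumElim [Fintype I] (i : I) (F : P ⊕ I → ℝ) :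
    ∑ w ∈ commWalks (Sum.elim comm id) i, F w
      = ∑ p ∈ commWalks comm i, F (Sum.inl p) + F (Sum.inr i) := by
  rw [commWalks, commWalks, Finset.sum_filter, Finset.sum_filter, Fintype.sum_sum_type]
  exact congrArg (_ + ·) (Fintype.sum_ite_eq' i _)

theorem PsiExt_sumElim_inr (h : P → ℝ → ℝ) (g : I → ℝ → ℝ) (i : I) (t : ℝ) :
    PsiExt t0 tf comm Psi Θ (Sum.elim h g) (Sum.inr i) t = Θ i (commVolume t0 tf comm h i) :=
  rfl

theorem isDEElastic_of_isDEFixedVolume_sumElim [Fintype I] (htf : t0 < tf)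
    (hBtil : ∀ i, Q i < Btil i * (tf - t0)) {h : P → ℝ → ℝ} {g : I → ℝ → ℝ}
    (hde : IsDEFixedVolume t0 tf (Sum.elim comm id) (Sum.elim B Btil) Q
      (PsiExt t0 tf comm Psi Θ) (Sum.elim h g)) :
    IsDEElastic t0 tf comm B Q Psi Θ h (commVolume t0 tf comm h) := by
  obtain ⟨⟨hinflow, hvol, hbound⟩, heq⟩ := hde
  have hh : WalkInflow t0 tf h := fun p => hinflow (Sum.inl p)
  have hsplit (i : I) : ∫ t, g i t ∂(horizonMeasure t0 tf) = Q i - commVolume t0 tf comm h i := by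
    have := hvol i
    rw [sum_commWalks_sumElim] at this
    exact eq_sub_of_add_eq' this
  have hle (i : I) : commVolume t0 tf comm h i ≤ Q i := by
    have := integral_nonneg_of_ae (hinflow (Sum.inr i)).2
    simp only [Sum.elim_inr, hsplit] at this
    linarith
  refine ⟨fun i => ⟨commVolume_nonneg hh i, hle i⟩, ⟨hh, fun i => rfl, fun p => hbound (Sum.inl p)⟩,
    fun i => ?_⟩
  obtain ⟨ν, hν⟩ := heq i
  have hdummy := hν (Sum.inr i) rfl
  simp only [PsiExt_sumElim_inr, Sum.elim_inr] at hdummy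
  refine ⟨ν, fun p hp => hν (Sum.inl p) hp, (elastic_price_iff (hle i)).2 ⟨?_, fun hlt => ?_⟩⟩
  · refine prop_of_ae_lt_imp_of_integral_ne (hbound (Sum.inr i)) ?_
      (hdummy.mono fun _ ht => ht.2)
    have := commVolume_nonneg (comm := comm) hh i
    simp only [Sum.elim_inr, hsplit, horizonMeasure_real_univ htf.le]
    exact ne_of_lt (by linarith [hBtil i])
  · refine prop_of_ae_pos_imp_of_integral_ne_zero (hinflow (Sum.inr i)).2 ?_
      (hdummy.mono fun _ ht => ht.1)
    rw [Sum.elim_inr, hsplit]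
    linarith

theorem isDEFixedVolume_sumElim_of_isDEElastic [Fintype I] (htf : t0 < tf)
    (hBtil : ∀ i, Q i < Btil i * (tf - t0)) {h : P → ℝ → ℝ}
    (hel : IsDEElastic t0 tf comm B Q Psi Θ h (commVolume t0 tf comm h)) :
    IsDEFixedVolume t0 tf (Sum.elim comm id) (Sum.elim B Btil) Q (PsiExt t0 tf comm Psi Θ)
      (Sum.elim h fun i _ => (Q i - commVolume t0 tf comm h i) / (tf - t0)) := by
  obtain ⟨hQs, ⟨hh, -, hbound⟩, heq⟩ := hel
  have hlen : 0 < tf - t0 := sub_pos.2 htf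
  refine ⟨⟨?_, fun i => ?_, ?_⟩, fun i => ?_⟩
  · rintro (p | i)
    · exact hh p
    · exact ⟨memLp_const _, ae_of_all _ fun _ => div_nonneg (sub_nonneg.2 (hQs i).2) hlen.le⟩
  · rw [sum_commWalks_sumElim]
    simp only [Sum.elim_inl, Sum.elim_inr, integral_const, smul_eq_mul,
      horizonMeasure_real_univ htf.le, mul_div_cancel₀ _ hlen.ne']
    exact add_sub_cancel _ _
  · rintro (p | i)
    · exact hbound p
    · refine ae_of_all _ fun _ => (div_lt_iff₀ hlen).2 ?_ |>.le
      simp only [Sum.elim_inr]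
      linarith [hBtil i, (hQs i).1]
  · obtain ⟨ν, hν, hprice⟩ := heq i
    obtain ⟨hνle, hνge⟩ := (elastic_price_iff (hQs i).2).1 hprice
    refine ⟨ν, ?_⟩
    rintro (p | j) hj
    · exact hν p hj
    · obtain rfl : j = i := hj
      refine ae_of_all _ fun _ => ⟨fun hpos => hνge ?_, fun _ => hνle⟩
      exact sub_pos.1 (pos_of_mul_pos_left hpos (inv_nonneg.2 hlen.le))

end ExtendedInstance

theorem stmt0_general {I P : Type*} [Fintype I] [Fintype P] [DecidableEq I]
    (t0 tf : ℝ) (htf : t0 < tf)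
    (comm : P → I)
    (B : P → ℝ)
    (Q : I → ℝ)
    (Psi : (P → ℝ → ℝ) → P → ℝ → ℝ)
    (Θ : I → ℝ → ℝ)
    (Btil : I → ℝ)
    (hBtil : ∀ i, Q i < Btil i * (tf - t0)) :
    (∀ h' : P ⊕ I → ℝ → ℝ,
      IsDEFixedVolume t0 tf (Sum.elim comm id) (Sum.elim B Btil) Q
        (PsiExt t0 tf comm Psi Θ) h' →
      IsDEElastic t0 tf comm B Q Psi Θ (fun p => h' (Sum.inl p))
        (fun i => ∑ p ∈ commWalks comm i,
          ∫ t, h' (Sum.inl p) t ∂(horizonMeasure t0 tf)))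
    ∧
    (∀ (h : P → ℝ → ℝ) (Qstar : I → ℝ),
      IsDEElastic t0 tf comm B Q Psi Θ h Qstar →
      IsDEFixedVolume t0 tf (Sum.elim comm id) (Sum.elim B Btil) Q
        (PsiExt t0 tf comm Psi Θ)
        (Sum.elim h (fun i _ => (Q i - Qstar i) / (tf - t0)))) := by
  refine ⟨fun h' hde => ?_, fun h Qstar hel => ?_⟩
  · rw [← Sum.elim_comp_inl_inr h'] at hde
    exact isDEElastic_of_isDEFixedVolume_sumElim htf hBtil hde
  · obtain rfl := eq_commVolume_of_mem_LambdaQ hel.2.1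
    exact isDEFixedVolume_sumElim_of_isDEElastic htf hBtil hel

theorem stmt0 {I P : Type*} [Fintype I] [Fintype P] [DecidableEq I]
    (t0 tf : ℝ) (ht0 : 0 ≤ t0) (htf : t0 < tf)
    (comm : P → I) (hcomm : ∀ i, ∃ p, comm p = i)
    (B : P → ℝ) (hB : ∀ p, 0 ≤ B p)
    (Q : I → ℝ) (hQ : ∀ i, 0 ≤ Q i)
    (Psi : (P → ℝ → ℝ) → P → ℝ → ℝ)
    (Θ : I → ℝ → ℝ)
    (hΘ : ∀ i, ∀ x ∈ Icc 0 (Q i), ∀ y ∈ Icc 0 (Q i), x ≤ y → Θ i y ≤ Θ i x)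
    (Btil : I → ℝ) (hBtil0 : ∀ i, 0 ≤ Btil i)
    (hBtil : ∀ i, Q i < Btil i * (tf - t0)) :
    (∀ h' : P ⊕ I → ℝ → ℝ,
      IsDEFixedVolume t0 tf (Sum.elim comm id) (Sum.elim B Btil) Q
        (PsiExt t0 tf comm Psi Θ) h' →
      IsDEElastic t0 tf comm B Q Psi Θ (fun p => h' (Sum.inl p))
        (fun i => ∑ p ∈ commWalks comm i,
          ∫ t, h' (Sum.inl p) t ∂(horizonMeasure t0 tf)))
    ∧
    (∀ (h : P → ℝ → ℝ) (Qstar : I → ℝ),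
      IsDEElastic t0 tf comm B Q Psi Θ h Qstar →
      IsDEFixedVolume t0 tf (Sum.elim comm id) (Sum.elim B Btil) Q
        (PsiExt t0 tf comm Psi Θ)
        (Sum.elim h (fun i _ => (Q i - Qstar i) / (tf - t0)))) :=
  stmt0_general t0 tf htf comm B Q Psi Θ Btil hBtil

end
end

section
/- Assume that for every p ∈ 𝒫 and every h ∈ Λ(r) the function Ψ_p(h,·) is real-valued and bounded. Then a walk inflow h* ∈ Λ(r) is a dynamic equilibrium with fixed inflow rates if and only if h* solves the variational inequality VI(Ψ,r): ⟨Ψ(h*), h − h*⟩ ≥ 0 for all h ∈ Λ(r). -/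
open MeasureTheory Filter Set

noncomputable section

variable {I P E : Type*}

/-!
If `h*` is an equilibrium, then at almost every time `t` each commodity `i` sends its flow only
along walks of least delay `m_i(t) = min_{p ∈ 𝒫_i} Ψ_p(h*,t)`; hence for every `h ∈ Λ(r)`,
pointwise in `t`, `∑_p Ψ_p(h*,t) h*_p(t) = ∑_i m_i(t) r_i(t) ≤ ∑_p Ψ_p(h*,t) h_p(t)`, and
integrating gives the variational inequality. Conversely, if `h*_p > 0` and `Ψ_q < Ψ_p` on a
non-null set `E` for walks `p, q` of the same commodity, moving the inflow of `p` on `E` onto `q`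
yields an `h ∈ Λ(r)` with `⟨Ψ(h*), h − h*⟩ = ∫_E (Ψ_q − Ψ_p) h*_p < 0`.
-/

lemma mem_commWalks [Fintype P] [DecidableEq I] {comm : P → I} {i : I} {p : P} :
    p ∈ commWalks comm i ↔ comm p = i := by
  simp [commWalks]

lemma Finset.sum_mul_le_sum_mul_of_support_minimizing {ι : Type*} (s : Finset ι)
    {c x y : ι → ℝ} (hx : ∀ p ∈ s, 0 ≤ x p) (hy : ∀ p ∈ s, 0 ≤ y p)
    (hxy : ∑ p ∈ s, x p = ∑ p ∈ s, y p) (hmin : ∀ p ∈ s, ∀ q ∈ s, 0 < y p → c p ≤ c q) :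
    ∑ p ∈ s, c p * y p ≤ ∑ p ∈ s, c p * x p := by
  rcases s.eq_empty_or_nonempty with rfl | hs
  · simp
  obtain ⟨m, hm, hm_le⟩ := s.exists_min_image c hs
  have hy_eq : ∀ p ∈ s, c p * y p = c m * y p := by
    intro p hp
    rcases (hy p hp).eq_or_lt with h0 | hpos
    · simp [← h0]
    · rw [le_antisymm (hmin p hp m hm hpos) (hm_le p hp)]
  calc ∑ p ∈ s, c p * y p = c m * ∑ p ∈ s, x p := by
        rw [Finset.sum_congr rfl hy_eq, ← Finset.mul_sum, hxy]
    _ = ∑ p ∈ s, c m * x p := Finset.mul_sum _ _ _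
    _ ≤ ∑ p ∈ s, c p * x p :=
        Finset.sum_le_sum fun p hp => mul_le_mul_of_nonneg_right (hm_le p hp) (hx p hp)

lemma sum_mul_sub_nonneg_of_support_minimizing [Fintype I] [Fintype P] [DecidableEq I]
    (comm : P → I) {c x y : P → ℝ} (hx : 0 ≤ x) (hy : 0 ≤ y)
    (hxy : ∀ i, ∑ p ∈ commWalks comm i, x p = ∑ p ∈ commWalks comm i, y p)
    (hmin : ∀ p q, comm p = comm q → 0 < y p → c p ≤ c q) :
    0 ≤ ∑ p, c p * (x p - y p) := by
  simp only [mul_sub, Finset.sum_sub_distrib, sub_nonneg]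
  rw [← Finset.sum_fiberwise Finset.univ comm, ← Finset.sum_fiberwise Finset.univ comm]
  refine Finset.sum_le_sum fun i _ => ?_
  refine Finset.sum_mul_le_sum_mul_of_support_minimizing _ (fun p _ => hx p)
    (fun p _ => hy p) (hxy i) fun p hp q hq => hmin p q ?_
  rw [Finset.mem_filter] at hp hq
  rw [hp.2, hq.2]

lemma ae_eq_zero_of_nonpos_of_integral_nonneg {α : Type*} [MeasurableSpace α] {μ : Measure α}
    {f : α → ℝ} (hf : Integrable f μ) (hf_nonpos : f ≤ᵐ[μ] 0) (h : 0 ≤ ∫ x, f x ∂μ) :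
    f =ᵐ[μ] 0 := by
  have hneg : 0 ≤ᵐ[μ] -f := by
    filter_upwards [hf_nonpos] with x hx
    simpa using hx
  have hzero : ∫ x, (-f) x ∂μ = 0 :=
    le_antisymm (by simpa [integral_neg] using h) (integral_nonneg_of_ae hneg)
  filter_upwards [(integral_eq_zero_iff_of_nonneg_ae hneg hf.neg).mp hzero] with x hx
  simpa using hx

lemma Hshift_zero_sub_self [DecidableEq P] (h : P → ℝ → ℝ) (p q w : P) (γ : ℝ → ℝ) (t : ℝ) :
    Hshift h p q γ 0 w t - h w t = (if w = q then γ t else 0) - (if w = p then γ t else 0) := by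
  simp only [Hshift, sub_zero]
  ring

section Horizon

variable {t0 tf : ℝ}

instance isFiniteMeasure_horizonMeasure : IsFiniteMeasure (horizonMeasure t0 tf) := by
  unfold horizonMeasure
  infer_instance

lemma ae_mem_Icc_horizonMeasure : ∀ᵐ t ∂(horizonMeasure t0 tf), t ∈ Icc t0 tf :=
  ae_restrict_mem measurableSet_Icc

lemma integrable_mul_of_bounded_of_memLp {ψ f : ℝ → ℝ}
    (hψ : AEStronglyMeasurable ψ (horizonMeasure t0 tf))
    (hψ_bdd : ∃ M, ∀ t ∈ Icc t0 tf, |ψ t| ≤ M) (hf : MemLp f 2 (horizonMeasure t0 tf)) :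
    Integrable (fun t => ψ t * f t) (horizonMeasure t0 tf) := by
  obtain ⟨M, hM⟩ := hψ_bdd
  refine (hf.integrable one_le_two).bdd_mul (c := M) hψ ?_
  filter_upwards [ae_mem_Icc_horizonMeasure] with t ht
  exact hM t ht

lemma inner2_eq_integral_sum [Fintype P] {f g : P → ℝ → ℝ}
    (hfg : ∀ p, Integrable (fun t => f p t * g p t) (horizonMeasure t0 tf)) :
    inner2 t0 tf f g = ∫ t, ∑ p, f p t * g p t ∂(horizonMeasure t0 tf) :=
  (integral_finsetSum _ fun p _ => hfg p).symm

lemma Hshift_zero_mem_LambdaR [Fintype P] [DecidableEq P] [DecidableEq I] {comm : P → I}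
    {r : I → ℝ → ℝ} {h : P → ℝ → ℝ} {p q : P} {γ : ℝ → ℝ} (hh : h ∈ LambdaR t0 tf comm r)
    (hpq : comm p = comm q) (hγ : L2nonneg t0 tf γ) (hγh : γ ≤ᵐ[horizonMeasure t0 tf] h p) :
    Hshift h p q γ 0 ∈ LambdaR t0 tf comm r := by
  refine ⟨fun w => ⟨?_, ?_⟩, fun i => ?_⟩
  · have hite : ∀ v : P, MemLp (fun t => if w = v then γ t else 0) 2 (horizonMeasure t0 tf) :=
      fun v => by by_cases hv : w = v <;> simp [hv, hγ.1]
    convert ((hh.1 w).1.add (hite q)).sub (hite p) using 1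
    ext t
    simp [Hshift]
  · filter_upwards [(hh.1 w).2, hγ.2, hγh] with t hw hγt hγht
    simp only [Hshift, sub_zero, Pi.zero_apply] at hw hγt ⊢
    split_ifs <;> subst_vars <;> linarith
  · filter_upwards [hh.2 i] with t ht
    simp only [Hshift, sub_zero, Finset.sum_sub_distrib, Finset.sum_add_distrib,
      Finset.sum_ite_eq', mem_commWalks, hpq, ht]
    split_ifs <;> ring

lemma inner2_Hshift_zero_sub_self [Fintype P] [DecidableEq P] {f h : P → ℝ → ℝ} {p q : P}
    {γ : ℝ → ℝ} (hp : Integrable (fun t => f p t * γ t) (horizonMeasure t0 tf))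
    (hq : Integrable (fun t => f q t * γ t) (horizonMeasure t0 tf)) :
    inner2 t0 tf f (fun w t => Hshift h p q γ 0 w t - h w t) =
      ∫ t, (f q t - f p t) * γ t ∂(horizonMeasure t0 tf) := by
  have hterm : ∀ w, ∫ t, f w t * (Hshift h p q γ 0 w t - h w t) ∂(horizonMeasure t0 tf) =
      (if w = q then ∫ t, f w t * γ t ∂(horizonMeasure t0 tf) else 0) -
        (if w = p then ∫ t, f w t * γ t ∂(horizonMeasure t0 tf) else 0) := by
    intro w
    simp only [Hshift_zero_sub_self]
    split_ifs with hwq hwp hwp <;> subst_vars <;> simp [integral_neg]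
  simp only [inner2, hterm, Finset.sum_sub_distrib, Finset.sum_ite_eq', Finset.mem_univ,
    if_true, ← integral_sub hq hp, sub_mul]

theorem IsDEFixedRates.inner2_sub_nonneg [Fintype I] [Fintype P] [DecidableEq I]
    {comm : P → I} {r : I → ℝ → ℝ} {Psi : (P → ℝ → ℝ) → P → ℝ → ℝ} {hstar h : P → ℝ → ℝ}
    (hmeas : ∀ p, Measurable (Psi hstar p))
    (hbd : ∀ p, ∃ M, ∀ t ∈ Icc t0 tf, |Psi hstar p t| ≤ M)
    (hde : IsDEFixedRates t0 tf comm r Psi hstar) (hh : h ∈ LambdaR t0 tf comm r) :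
    0 ≤ inner2 t0 tf (Psi hstar) (fun p t => h p t - hstar p t) := by
  obtain ⟨⟨hstar_inflow, hstar_sum⟩, hde⟩ := hde
  obtain ⟨h_inflow, h_sum⟩ := hh
  rw [inner2_eq_integral_sum (g := fun p t => h p t - hstar p t) fun p =>
    integrable_mul_of_bounded_of_memLp (hmeas p).aestronglyMeasurable (hbd p)
      ((h_inflow p).1.sub (hstar_inflow p).1)]
  have hmin : ∀ᵐ t ∂(horizonMeasure t0 tf), ∀ p q, comm p = comm q →
      0 < hstar p t → Psi hstar p t ≤ Psi hstar q t := by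
    simpa only [Filter.eventually_all, Filter.eventually_imp_distrib_left] using hde
  refine integral_nonneg_of_ae ?_
  filter_upwards [hmin, Filter.eventually_all.2 fun p => (h_inflow p).2,
    Filter.eventually_all.2 fun p => (hstar_inflow p).2, Filter.eventually_all.2 h_sum,
    Filter.eventually_all.2 hstar_sum] with t hmin_t hx hy hxr hyr
  exact sum_mul_sub_nonneg_of_support_minimizing comm (c := fun p => Psi hstar p t)
    (fun p => hx p) (fun p => hy p) (fun i => (hxr i).trans (hyr i).symm) hmin_t

theorem isDEFixedRates_of_forall_inner2_sub_nonneg [Fintype P] [DecidableEq I]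
    {comm : P → I} {r : I → ℝ → ℝ} {Psi : (P → ℝ → ℝ) → P → ℝ → ℝ} {hstar : P → ℝ → ℝ}
    (hmeas : ∀ p, Measurable (Psi hstar p))
    (hbd : ∀ p, ∃ M, ∀ t ∈ Icc t0 tf, |Psi hstar p t| ≤ M)
    (hmem : hstar ∈ LambdaR t0 tf comm r)
    (hvi : ∀ h ∈ LambdaR t0 tf comm r,
      0 ≤ inner2 t0 tf (Psi hstar) (fun p t => h p t - hstar p t)) :
    IsDEFixedRates t0 tf comm r Psi hstar := by
  classical
  refine ⟨hmem, fun p q hpq => ?_⟩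
  set E := {t | Psi hstar q t < Psi hstar p t}
  set γ := E.indicator (hstar p)
  have hE : MeasurableSet E := measurableSet_lt (hmeas q) (hmeas p)
  have hγ : L2nonneg t0 tf γ := by
    refine ⟨(hmem.1 p).1.indicator hE, ?_⟩
    filter_upwards [(hmem.1 p).2] with t ht
    exact Set.indicator_nonneg (fun _ _ => ht) t
  have hγh : γ ≤ᵐ[horizonMeasure t0 tf] hstar p := by
    filter_upwards [(hmem.1 p).2] with t ht
    exact Set.indicator_le_self' (fun _ _ => ht) t
  have hint : ∀ w, Integrable (fun t => Psi hstar w t * γ t) (horizonMeasure t0 tf) :=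
    fun w => integrable_mul_of_bounded_of_memLp (hmeas w).aestronglyMeasurable (hbd w) hγ.1
  have hzero : (fun t => (Psi hstar q t - Psi hstar p t) * γ t) =ᵐ[horizonMeasure t0 tf] 0 := by
    refine ae_eq_zero_of_nonpos_of_integral_nonneg
      (by simpa only [sub_mul, Pi.sub_def] using (hint q).sub (hint p)) ?_ ?_
    · filter_upwards [hγ.2] with t ht
      by_cases htE : t ∈ E
      · exact mul_nonpos_of_nonpos_of_nonneg (sub_nonpos.2 (le_of_lt htE)) ht
      · simp [γ, htE]
    · rw [← inner2_Hshift_zero_sub_self (h := hstar) (hint p) (hint q)]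
      exact hvi _ (Hshift_zero_mem_LambdaR hmem hpq hγ hγh)
  filter_upwards [hzero] with t ht hpos
  by_contra hlt
  have htE : t ∈ E := not_le.1 hlt
  have hdiff : Psi hstar q t - Psi hstar p t ≠ 0 := sub_ne_zero.2 (ne_of_lt htE)
  simp only [γ, Set.indicator_of_mem htE, Pi.zero_apply, mul_eq_zero, hdiff, false_or] at ht
  exact hpos.ne' ht

end Horizon

theorem stmt1_general {I P : Type*} [Fintype I] [Fintype P] [DecidableEq I]
    (t0 tf : ℝ) (comm : P → I) (r : I → ℝ → ℝ)
    (Psi : (P → ℝ → ℝ) → P → ℝ → ℝ)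
    (hmeas : ∀ h p, Measurable (Psi h p))
    (hbd : ∀ h ∈ LambdaR t0 tf comm r, ∀ p, ∃ M, ∀ t ∈ Icc t0 tf, |Psi h p t| ≤ M)
    (hstar : P → ℝ → ℝ) (hmem : hstar ∈ LambdaR t0 tf comm r) :
    IsDEFixedRates t0 tf comm r Psi hstar ↔
      ∀ h ∈ LambdaR t0 tf comm r,
        0 ≤ inner2 t0 tf (Psi hstar) (fun p t => h p t - hstar p t) :=
  ⟨fun hde _ hh => hde.inner2_sub_nonneg (hmeas hstar) (hbd hstar hmem) hh,
    isDEFixedRates_of_forall_inner2_sub_nonneg (hmeas hstar) (hbd hstar hmem) hmem⟩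

theorem stmt1 {I P : Type*} [Fintype I] [Fintype P] [DecidableEq I]
    (t0 tf : ℝ) (ht0 : 0 ≤ t0) (htf : t0 < tf)
    (comm : P → I) (hcomm : ∀ i, ∃ p, comm p = i)
    (r : I → ℝ → ℝ) (hr : ∀ i, L2nonneg t0 tf (r i))
    (Psi : (P → ℝ → ℝ) → P → ℝ → ℝ)
    (hmeas : ∀ h p, Measurable (Psi h p))
    (hbd : ∀ h ∈ LambdaR t0 tf comm r, ∀ p, ∃ M, ∀ t ∈ Icc t0 tf, |Psi h p t| ≤ M)
    (hstar : P → ℝ → ℝ) (hmem : hstar ∈ LambdaR t0 tf comm r) :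
    IsDEFixedRates t0 tf comm r Psi hstar ↔
      ∀ h ∈ LambdaR t0 tf comm r,
        0 ≤ inner2 t0 tf (Psi hstar) (fun p t => h p t - hstar p t) :=
  stmt1_general t0 tf comm r Psi hmeas hbd hstar hmem

end
end

section
/- A flow h ∈ S is NOT a side-constrained dynamic equilibrium w.r.t. S and (A_p) if and only if there exist a commodity i ∈ I, walks p,q ∈ 𝒫_i, times t,t' ∈ [t₀,t_f] with Δ := t' − t, and a sequence of functions γ_n ∈ L²₊([t₀,t_f]) such that: (a) the essential supremum of γ_n tends to 0 as n → ∞; (b) lim_n sup{θ ∈ [t₀,t_f] : supp(γ_n) ∩ [t₀,θ] has measure zero} ≥ t and lim_n inf{θ ∈ [t₀,t_f] : supp(γ_n) ∩ [θ,t_f] has measure zero} ≤ t; (c) Ψ_p(h,t) > Ψ_q(h,t'); and (d) ∫_{t₀}^{t_f} γ_n(θ)dθ > 0 and (q,γ_n,Δ) ∈ A_p(h) for every n ∈ ℕ. -/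
open MeasureTheory Filter Set

noncomputable section

variable {I P E : Type*}

/-!
A pair `(q, Δ)` lies in `U_p(h, t)` exactly when there are admissible deviations `(q, γₙ, Δ)`
with `ess sup γₙ → 0` whose essential supports shrink to `t`: one direction takes
`δ = ε = 1/(n+1)` in the definition of `U_p(h, t)`, the other picks `n` large for given `δ, ε`.
The only subtlety is that the essential supremum of a real function controls it almost
everywhere only if it is essentially bounded; here the capacity constraint
`h_q + γ(· - Δ) ≤ B_q` bounds `γ` by `B_q`. The theorem is then the negation of the SCDE
condition, with `t' = t + Δ`, which lies in the horizon because the shifted deviations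
`γ(· - Δ)` are supported there.
-/

/-- The essential left end of the support of `g` in `[t₀, t_f]`. -/
def supportStart (t0 tf : ℝ) (g : ℝ → ℝ) : ℝ :=
  sSup {θ | θ ∈ Icc t0 tf ∧ volume ({s | g s ≠ 0} ∩ Icc t0 θ) = 0}

/-- The essential right end of the support of `g` in `[t₀, t_f]`. -/
def supportEnd (t0 tf : ℝ) (g : ℝ → ℝ) : ℝ :=
  sInf {θ | θ ∈ Icc t0 tf ∧ volume ({s | g s ≠ 0} ∩ Icc θ tf) = 0}

section Support

variable {t0 tf : ℝ} {g : ℝ → ℝ}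

lemma volume_inter_Icc_eq_zero_of_ae {X : Set ℝ} (hX : ∀ᵐ s ∂horizonMeasure t0 tf, s ∉ X) :
    volume (X ∩ Icc t0 tf) = 0 := by
  rwa [horizonMeasure, ← measure_eq_zero_iff_ae_notMem,
    Measure.restrict_apply' measurableSet_Icc] at hX

lemma ae_notMem_horizonMeasure_of_volume {X : Set ℝ} (hX : volume X = 0) :
    ∀ᵐ s ∂horizonMeasure t0 tf, s ∉ X :=
  ae_restrict_of_ae (measure_eq_zero_iff_ae_notMem.mp hX)

lemma supportStart_mem_Icc (htf : t0 ≤ tf) : supportStart t0 tf g ∈ Icc t0 tf := by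
  have ht0 : t0 ∈ {θ | θ ∈ Icc t0 tf ∧ volume ({s | g s ≠ 0} ∩ Icc t0 θ) = 0} :=
    ⟨⟨le_rfl, htf⟩, measure_mono_null inter_subset_right (by simp)⟩
  exact ⟨le_csSup ⟨tf, fun θ hθ => hθ.1.2⟩ ht0, csSup_le ⟨t0, ht0⟩ fun θ hθ => hθ.1.2⟩

lemma supportEnd_mem_Icc (htf : t0 ≤ tf) : supportEnd t0 tf g ∈ Icc t0 tf := by
  have htf' : tf ∈ {θ | θ ∈ Icc t0 tf ∧ volume ({s | g s ≠ 0} ∩ Icc θ tf) = 0} :=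
    ⟨⟨htf, le_rfl⟩, measure_mono_null inter_subset_right (by simp)⟩
  exact ⟨le_csInf ⟨tf, htf'⟩ fun θ hθ => hθ.1.1, csInf_le ⟨t0, fun θ hθ => hθ.1.1⟩ htf'⟩

lemma max_le_supportStart (htf : t0 ≤ tf) {a : ℝ} (ha : a ≤ tf)
    (hg : ∀ᵐ s ∂horizonMeasure t0 tf, g s ≠ 0 → a ≤ s) :
    max t0 a ≤ supportStart t0 tf g := by
  have hθ : max t0 a ∈ Icc t0 tf := ⟨le_max_left _ _, max_le htf ha⟩
  refine le_csSup ⟨tf, fun θ hθ => hθ.1.2⟩ ⟨hθ, ?_⟩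
  -- a point of `{g ≠ 0} ∩ [t₀, max t₀ a]` that obeys `hg` is the right endpoint
  have hbad := volume_inter_Icc_eq_zero_of_ae (X := {s | g s ≠ 0 ∧ ¬ a ≤ s})
    (hg.mono fun s hs hs' => hs'.2 (hs hs'.1))
  refine measure_mono_null (fun s ⟨hs, hsI⟩ => ?_)
    (measure_union_null hbad (Real.volume_singleton (a := max t0 a)))
  by_cases has : a ≤ s
  · exact Or.inr (le_antisymm hsI.2 (max_le hsI.1 has))
  · exact Or.inl ⟨⟨hs, has⟩, hsI.1, hsI.2.trans hθ.2⟩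

lemma supportEnd_le_min (htf : t0 ≤ tf) {b : ℝ} (hb : t0 ≤ b)
    (hg : ∀ᵐ s ∂horizonMeasure t0 tf, g s ≠ 0 → s ≤ b) :
    supportEnd t0 tf g ≤ min tf b := by
  have hθ : min tf b ∈ Icc t0 tf := ⟨le_min htf hb, min_le_left _ _⟩
  refine csInf_le ⟨t0, fun θ hθ => hθ.1.1⟩ ⟨hθ, ?_⟩
  have hbad := volume_inter_Icc_eq_zero_of_ae (X := {s | g s ≠ 0 ∧ ¬ s ≤ b})
    (hg.mono fun s hs hs' => hs'.2 (hs hs'.1))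
  refine measure_mono_null (fun s ⟨hs, hsI⟩ => ?_)
    (measure_union_null hbad (Real.volume_singleton (a := min tf b)))
  by_cases hsb : s ≤ b
  · exact Or.inr (le_antisymm (le_min hsI.2 hsb) hsI.1)
  · exact Or.inl ⟨⟨hs, hsb⟩, hθ.1.trans hsI.1, hsI.2⟩

lemma ae_lt_of_lt_supportStart (htf : t0 ≤ tf) {a : ℝ} (ha : a < supportStart t0 tf g) :
    ∀ᵐ s ∂horizonMeasure t0 tf, g s ≠ 0 → a < s := by
  obtain ⟨θ, ⟨hθ, hθ0⟩, haθ⟩ := exists_lt_of_lt_csSup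
    ⟨t0, (⟨⟨le_rfl, htf⟩, measure_mono_null inter_subset_right (by simp)⟩ :
      t0 ∈ {θ | θ ∈ Icc t0 tf ∧ volume ({s | g s ≠ 0} ∩ Icc t0 θ) = 0})⟩ ha
  filter_upwards [ae_notMem_horizonMeasure_of_volume hθ0,
    ae_restrict_mem measurableSet_Icc] with s hs hsI hgs
  exact haθ.trans (not_le.mp fun hsθ => hs ⟨hgs, hsI.1, hsθ⟩)

lemma ae_lt_of_supportEnd_lt (htf : t0 ≤ tf) {b : ℝ} (hb : supportEnd t0 tf g < b) :
    ∀ᵐ s ∂horizonMeasure t0 tf, g s ≠ 0 → s < b := by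
  obtain ⟨θ, ⟨hθ, hθ0⟩, hθb⟩ := exists_lt_of_csInf_lt
    ⟨tf, (⟨⟨htf, le_rfl⟩, measure_mono_null inter_subset_right (by simp)⟩ :
      tf ∈ {θ | θ ∈ Icc t0 tf ∧ volume ({s | g s ≠ 0} ∩ Icc θ tf) = 0})⟩ hb
  filter_upwards [ae_notMem_horizonMeasure_of_volume hθ0,
    ae_restrict_mem measurableSet_Icc] with s hs hsI hgs
  exact (not_le.mp fun hθs => hs ⟨hgs, hθs, hsI.2⟩).trans hθb

end Support

lemma exists_ne_zero_of_integral_pos {α : Type*} [MeasurableSpace α] {μ : Measure α}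
    {f : α → ℝ} {r : α → Prop} (hf : 0 < ∫ x, f x ∂μ) (hr : ∀ᵐ x ∂μ, f x ≠ 0 → r x) :
    ∃ x, f x ≠ 0 ∧ r x := by
  by_contra! hne
  have hf0 : f =ᵐ[μ] 0 := hr.mono fun x hx => by_contra fun h0 => hne x h0 (hx h0)
  exact hf.ne' (integral_eq_zero_of_ae hf0)

lemma essSup_mem_Icc_of_ae {α : Type*} [MeasurableSpace α] {μ : Measure α} [NeZero μ]
    {f : α → ℝ} {c : ℝ} (h0 : 0 ≤ᵐ[μ] f) (hc : ∀ᵐ x ∂μ, f x ≤ c) : essSup f μ ∈ Icc 0 c :=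
  ⟨le_limsup_of_frequently_le h0.frequently (isBoundedUnder_of_eventually_le hc),
    essSup_le_of_ae_le c hc (isBoundedUnder_of_eventually_ge h0).isCoboundedUnder_le⟩

lemma le_liminf_of_tendsto_of_le {ι : Type*} {l : Filter ι} [l.NeBot] {u v : ι → ℝ} {a M : ℝ}
    (hv : Tendsto v l (nhds a)) (hvu : ∀ i, v i ≤ u i) (hu : ∀ i, u i ≤ M) :
    a ≤ liminf u l :=
  hv.liminf_eq ▸ liminf_le_liminf (Eventually.of_forall hvu) hv.isBoundedUnder_ge
    (isCoboundedUnder_ge_of_le l hu)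

lemma limsup_le_of_tendsto_of_le {ι : Type*} {l : Filter ι} [l.NeBot] {u v : ι → ℝ} {a m : ℝ}
    (hv : Tendsto v l (nhds a)) (huv : ∀ i, u i ≤ v i) (hu : ∀ i, m ≤ u i) :
    limsup u l ≤ a :=
  hv.limsup_eq ▸ limsup_le_limsup (Eventually.of_forall huv) (isCoboundedUnder_le_of_le l hu)
    hv.isBoundedUnder_le

lemma horizonMeasure_ne_zero {t0 tf : ℝ} (htf : t0 < tf) : horizonMeasure t0 tf ≠ 0 := by
  rw [horizonMeasure, Ne, Measure.restrict_eq_zero, Real.volume_Icc]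
  simpa using htf

section Deviation

variable {t0 tf : ℝ} {comm : P → I} {B : P → ℝ} {h : P → ℝ → ℝ} {p q : P} {γ : ℝ → ℝ} {Δ : ℝ}

lemma ValidTriple.ae_add_mem_Icc (hv : ValidTriple t0 tf comm B h p q γ Δ) :
    ∀ᵐ s, γ s ≠ 0 → s + Δ ∈ Icc t0 tf := by
  simpa using (measurePreserving_add_right volume Δ).quasiMeasurePreserving.ae hv.2.2.2.2

lemma ValidTriple.ae_le_bound (hv : ValidTriple t0 tf comm B h p q γ Δ)
    (hq : 0 ≤ᵐ[horizonMeasure t0 tf] h q) (hB : 0 ≤ B q) :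
    ∀ᵐ s ∂horizonMeasure t0 tf, γ s ≤ B q := by
  have hcap : ∀ᵐ u, u ∈ Icc t0 tf → γ (u - Δ) ≤ B q := by
    refine ae_imp_of_ae_restrict ?_
    filter_upwards [hq, hv.2.2.2.1] with u hu hcap
    linarith [show 0 ≤ h q u from hu]
  have hshift : ∀ᵐ u, γ (u - Δ) ≤ B q := by
    filter_upwards [hcap, hv.2.2.2.2] with u hcap hsupp
    by_cases h0 : γ (u - Δ) = 0
    · exact h0 ▸ hB
    · exact hcap (hsupp h0)
  refine ae_restrict_of_ae ?_
  simpa using (measurePreserving_add_right volume Δ).quasiMeasurePreserving.ae hshift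

variable {A : (P → ℝ → ℝ) → P → Set (P × (ℝ → ℝ) × ℝ)} {t : ℝ}

lemma add_mem_Icc_of_mem_UDev (hA : ∀ d ∈ A h p, ValidTriple t0 tf comm B h p d.1 d.2.1 d.2.2)
    (hU : (q, Δ) ∈ UDev t0 tf A h p t) : t + Δ ∈ Icc t0 tf := by
  have hnear : ∀ δ > 0, t0 ≤ t + Δ + δ ∧ t + Δ ≤ tf + δ := by
    intro δ hδ
    obtain ⟨γ, -, hint, -, hsupp, hmem⟩ := hU δ hδ 1 one_pos
    obtain ⟨s, -, hsI, hsΔ⟩ := exists_ne_zero_of_integral_pos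
      (r := fun s => s ∈ Icc (t - δ) (t + δ) ∧ s + Δ ∈ Icc t0 tf) hint <|
      (hsupp.and (ae_restrict_of_ae (hA _ hmem).ae_add_mem_Icc)).mono
        fun s hs hs0 => ⟨hs.1 hs0, hs.2 hs0⟩
    constructor <;> linarith [hsI.1, hsI.2, hsΔ.1, hsΔ.2]
  exact ⟨le_of_forall_pos_le_add fun δ hδ => (hnear δ hδ).1,
    le_of_forall_pos_le_add fun δ hδ => (hnear δ hδ).2⟩

end Deviation

/-- `(q, γₙ, Δ)` are admissible deviations from `p` whose heights tend to `0` and whose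
supports shrink to the time `t`. -/
def IsConcentratingDeviationSeq (t0 tf : ℝ) (A : (P → ℝ → ℝ) → P → Set (P × (ℝ → ℝ) × ℝ))
    (h : P → ℝ → ℝ) (p q : P) (t Δ : ℝ) (γn : ℕ → ℝ → ℝ) : Prop :=
  (∀ n, L2nonneg t0 tf (γn n)) ∧
  Tendsto (fun n => essSup (γn n) (horizonMeasure t0 tf)) atTop (nhds 0) ∧
  t ≤ liminf (fun n => supportStart t0 tf (γn n)) atTop ∧
  limsup (fun n => supportEnd t0 tf (γn n)) atTop ≤ t ∧
  ∀ n, 0 < ∫ s, γn n s ∂horizonMeasure t0 tf ∧ (q, γn n, Δ) ∈ A h p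

section Concentrating

variable {t0 tf : ℝ} {A : (P → ℝ → ℝ) → P → Set (P × (ℝ → ℝ) × ℝ)} {h : P → ℝ → ℝ}
  {p q : P} {t Δ : ℝ}

lemma exists_isConcentratingDeviationSeq_of_mem_UDev (htf : t0 < tf) (ht : t ∈ Icc t0 tf)
    (hU : (q, Δ) ∈ UDev t0 tf A h p t) :
    ∃ γn, IsConcentratingDeviationSeq t0 tf A h p q t Δ γn := by
  have : NeZero (horizonMeasure t0 tf) := ⟨horizonMeasure_ne_zero htf⟩
  set δ : ℕ → ℝ := fun n => 1 / ((n : ℝ) + 1)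
  have hδpos : ∀ n, 0 < δ n := fun n => by positivity
  have hδ : Tendsto δ atTop (nhds 0) := tendsto_one_div_add_atTop_nhds_zero_nat
  choose γn hL2 hint hle hsupp hmem using fun n => hU (δ n) (hδpos n) (δ n) (hδpos n)
  refine ⟨γn, hL2, ?_, ?_, ?_, fun n => ⟨hint n, hmem n⟩⟩
  · have hsup n := essSup_mem_Icc_of_ae (hL2 n).2 (hle n)
    exact tendsto_of_tendsto_of_tendsto_of_le_of_le tendsto_const_nhds hδ
      (fun n => (hsup n).1) fun n => (hsup n).2
  · have hlow : Tendsto (fun n => max t0 (t - δ n)) atTop (nhds t) := by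
      simpa [max_eq_right ht.1] using
        (tendsto_const_nhds (x := t0)).max ((tendsto_const_nhds (x := t)).sub hδ)
    refine le_liminf_of_tendsto_of_le hlow (fun n => ?_) fun n => (supportStart_mem_Icc htf.le).2
    exact max_le_supportStart htf.le (by linarith [ht.2, hδpos n])
      ((hsupp n).mono fun s hs h0 => (hs h0).1)
  · have hup : Tendsto (fun n => min tf (t + δ n)) atTop (nhds t) := by
      simpa [min_eq_right ht.2] using
        (tendsto_const_nhds (x := tf)).min ((tendsto_const_nhds (x := t)).add hδ)
    refine limsup_le_of_tendsto_of_le hup (fun n => ?_) fun n => (supportEnd_mem_Icc htf.le).1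
    exact supportEnd_le_min htf.le (by linarith [ht.1, hδpos n])
      ((hsupp n).mono fun s hs h0 => (hs h0).2)

lemma IsConcentratingDeviationSeq.mem_UDev {comm : P → I} {B : P → ℝ} {γn : ℕ → ℝ → ℝ}
    (hγ : IsConcentratingDeviationSeq t0 tf A h p q t Δ γn) (htf : t0 ≤ tf)
    (hA : ∀ d ∈ A h p, ValidTriple t0 tf comm B h p d.1 d.2.1 d.2.2)
    (hq : 0 ≤ᵐ[horizonMeasure t0 tf] h q) (hB : 0 ≤ B q) :
    (q, Δ) ∈ UDev t0 tf A h p t := by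
  obtain ⟨hL2, hsup, hstart, hend, hγn⟩ := hγ
  intro δ hδ ε hε
  have hlow : ∀ᶠ n in atTop, t - δ < supportStart t0 tf (γn n) :=
    eventually_lt_of_lt_liminf (by linarith) (isBoundedUnder_of_eventually_ge
      (Eventually.of_forall fun n => (supportStart_mem_Icc htf).1))
  have hup : ∀ᶠ n in atTop, supportEnd t0 tf (γn n) < t + δ :=
    eventually_lt_of_limsup_lt (by linarith) (isBoundedUnder_of_eventually_le
      (Eventually.of_forall fun n => (supportEnd_mem_Icc htf).2))
  obtain ⟨n, hn_small, hn_low, hn_up⟩ :=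
    ((hsup.eventually (gt_mem_nhds hε)).and (hlow.and hup)).exists
  have hbdd := isBoundedUnder_of_eventually_le ((hA _ (hγn n).2).ae_le_bound hq hB)
  refine ⟨γn n, hL2 n, (hγn n).1, ?_, ?_, (hγn n).2⟩
  · exact (ae_lt_of_essSup_lt hn_small hbdd).mono fun s hs => hs.le
  · filter_upwards [ae_lt_of_lt_supportStart htf hn_low, ae_lt_of_supportEnd_lt htf hn_up]
      with s hs_low hs_up hs
    exact ⟨(hs_low hs).le, (hs_up hs).le⟩

end Concentrating

theorem stmt5_general {I P : Type*} [Fintype I] [Fintype P] [DecidableEq I]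
    (t0 tf : ℝ) (htf : t0 < tf)
    (comm : P → I)
    (B : P → ℝ) (hB : ∀ p, 0 ≤ B p)
    (Q : I → ℝ)
    (Psi : (P → ℝ → ℝ) → P → ℝ → WithTop ℝ)
    (S : Set (P → ℝ → ℝ)) (hS : S ⊆ LambdaQ t0 tf comm B Q)
    (A : (P → ℝ → ℝ) → P → Set (P × (ℝ → ℝ) × ℝ))
    (hA : ∀ h ∈ S, ∀ p, ∀ d ∈ A h p, ValidTriple t0 tf comm B h p d.1 d.2.1 d.2.2)
    (h : P → ℝ → ℝ) (hmem : h ∈ S) :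
    ¬ IsSCDE t0 tf Psi S A h ↔
      ∃ p q, comm p = comm q ∧
      ∃ t ∈ Icc t0 tf, ∃ t' ∈ Icc t0 tf, ∃ γn : ℕ → ℝ → ℝ,
        (∀ n, L2nonneg t0 tf (γn n)) ∧
        Tendsto (fun n => essSup (γn n) (horizonMeasure t0 tf)) atTop (nhds 0) ∧
        t ≤ Filter.liminf (fun n =>
          sSup {θ | θ ∈ Icc t0 tf ∧ volume ({s | γn n s ≠ 0} ∩ Icc t0 θ) = 0}) atTop ∧
        Filter.limsup (fun n =>
          sInf {θ | θ ∈ Icc t0 tf ∧ volume ({s | γn n s ≠ 0} ∩ Icc θ tf) = 0}) atTop ≤ t ∧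
        Psi h q t' < Psi h p t ∧
        ∀ n, 0 < (∫ s, γn n s ∂(horizonMeasure t0 tf)) ∧
          (q, γn n, t' - t) ∈ A h p := by
  have hAh := hA h hmem
  have hnot : ¬ IsSCDE t0 tf Psi S A h ↔ ∃ p, ∃ t ∈ Icc t0 tf, ∃ q Δ,
      (q, Δ) ∈ UDev t0 tf A h p t ∧ Psi h q (t + Δ) < Psi h p t := by
    simp [IsSCDE, hmem, and_assoc]
  rw [hnot]
  constructor
  · rintro ⟨p, t, ht, q, Δ, hU, hlt⟩
    obtain ⟨γn, hL2, hsup, hstart, hend, hγn⟩ :=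
      exists_isConcentratingDeviationSeq_of_mem_UDev htf ht hU
    refine ⟨p, q, (hAh p _ (hγn 0).2).1.symm, t, ht, t + Δ, add_mem_Icc_of_mem_UDev (hAh p) hU,
      γn, hL2, hsup, hstart, hend, hlt, ?_⟩
    simpa only [add_sub_cancel_left] using hγn
  · rintro ⟨p, q, -, t, ht, t', -, γn, hL2, hsup, hstart, hend, hlt, hγn⟩
    have hU := IsConcentratingDeviationSeq.mem_UDev ⟨hL2, hsup, hstart, hend, hγn⟩ htf.le
      (hAh p) ((hS hmem).1 q).2 (hB q)
    exact ⟨p, t, ht, q, t' - t, hU, by rwa [add_sub_cancel]⟩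

theorem stmt5 {I P : Type*} [Fintype I] [Fintype P] [DecidableEq I]
    (t0 tf : ℝ) (ht0 : 0 ≤ t0) (htf : t0 < tf)
    (comm : P → I) (hcomm : ∀ i, ∃ p, comm p = i)
    (B : P → ℝ) (hB : ∀ p, 0 ≤ B p)
    (Q : I → ℝ) (hQ : ∀ i, 0 ≤ Q i)
    (Psi : (P → ℝ → ℝ) → P → ℝ → WithTop ℝ)
    (S : Set (P → ℝ → ℝ)) (hS : S ⊆ LambdaQ t0 tf comm B Q)
    (A : (P → ℝ → ℝ) → P → Set (P × (ℝ → ℝ) × ℝ))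
    (hA : ∀ h ∈ S, ∀ p, ∀ d ∈ A h p, ValidTriple t0 tf comm B h p d.1 d.2.1 d.2.2)
    (h : P → ℝ → ℝ) (hmem : h ∈ S) :
    ¬ IsSCDE t0 tf Psi S A h ↔
      ∃ p q, comm p = comm q ∧
      ∃ t ∈ Icc t0 tf, ∃ t' ∈ Icc t0 tf, ∃ γn : ℕ → ℝ → ℝ,
        (∀ n, L2nonneg t0 tf (γn n)) ∧
        Tendsto (fun n => essSup (γn n) (horizonMeasure t0 tf)) atTop (nhds 0) ∧
        t ≤ Filter.liminf (fun n =>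
          sSup {θ | θ ∈ Icc t0 tf ∧ volume ({s | γn n s ≠ 0} ∩ Icc t0 θ) = 0}) atTop ∧
        Filter.limsup (fun n =>
          sInf {θ | θ ∈ Icc t0 tf ∧ volume ({s | γn n s ≠ 0} ∩ Icc θ tf) = 0}) atTop ≤ t ∧
        Psi h q t' < Psi h p t ∧
        ∀ n, 0 < (∫ s, γn n s ∂(horizonMeasure t0 tf)) ∧
          (q, γn n, t' - t) ∈ A h p :=
  stmt5_general t0 tf htf comm B hB Q Psi S hS A hA h hmem

end
end

section
/- Let S be a constraint set, let (A_p) and (A'_p) be two correspondences defining admissible γ-deviations, and let h* ∈ S be a feasible flow such that for every walk p ∈ 𝒫: for all (q,γ,Δ) ∈ A_p(h*) with γ ≠ 0 there exists (q,γ',Δ) ∈ A'_p(h*) with γ' ≠ 0 and γ' ≤ γ. If h* is a side-constrained dynamic equilibrium w.r.t. S and (A'_p), then h* is also a side-constrained dynamic equilibrium w.r.t. S and (A_p). -/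
open MeasureTheory Filter Set

noncomputable section

variable {I P E : Type*}

/-! A deviation `(q,γ,Δ) ∈ A_p(h*)` with `γ ≠ 0` witnessing `(q,Δ) ∈ U_p(h*,t)` can be traded
for the smaller `(q,γ',Δ) ∈ A'_p(h*)`: `γ'` inherits the bound `ε` and the support in
`[t-δ,t+δ]` from `γ`, and being nonnegative and not a.e. zero it has positive integral. Hence
`U_p(h*,t) ⊆ U'_p(h*,t)`, so every equilibrium inequality demanded by `A` is already demanded
by `A'`. -/

instance inst_s6 (t0 tf : ℝ) : IsFiniteMeasure (horizonMeasure t0 tf) := by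
  rw [horizonMeasure]
  infer_instance

theorem L2nonneg.integral_pos_iff {t0 tf : ℝ} {γ : ℝ → ℝ} (hγ : L2nonneg t0 tf γ) :
    0 < ∫ s, γ s ∂(horizonMeasure t0 tf) ↔ ¬ γ =ᵐ[horizonMeasure t0 tf] (fun _ => (0:ℝ)) := by
  rw [(integral_nonneg_of_ae hγ.2).lt_iff_ne', Ne,
    integral_eq_zero_iff_of_nonneg_ae hγ.2 (hγ.1.integrable one_le_two)]
  rfl

theorem UDev_subset_of_refines {t0 tf : ℝ} {A A' : (P → ℝ → ℝ) → P → Set (P × (ℝ → ℝ) × ℝ)}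
    {h : P → ℝ → ℝ} {p : P} (t : ℝ) (hA' : ∀ d ∈ A' h p, L2nonneg t0 tf d.2.1)
    (hrefine : ∀ q γ Δ, (q, γ, Δ) ∈ A h p →
      ¬ (γ =ᵐ[horizonMeasure t0 tf] (fun _ => (0:ℝ))) →
      ∃ γ' : ℝ → ℝ, (q, γ', Δ) ∈ A' h p ∧
        ¬ (γ' =ᵐ[horizonMeasure t0 tf] (fun _ => (0:ℝ))) ∧
        ∀ᵐ s ∂(horizonMeasure t0 tf), γ' s ≤ γ s) :
    UDev t0 tf A h p t ⊆ UDev t0 tf A' h p t := by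
  rintro ⟨q, Δ⟩ hU δ hδ ε hε
  obtain ⟨γ, hγ, hint, hbound, hsupp, hmemA⟩ := hU δ hδ ε hε
  obtain ⟨γ', hmemA', hne', hle⟩ := hrefine q γ Δ hmemA (hγ.integral_pos_iff.mp hint)
  have hγ' : L2nonneg t0 tf γ' := hA' _ hmemA'
  refine ⟨γ', hγ', hγ'.integral_pos_iff.mpr hne', ?_, ?_, hmemA'⟩
  · filter_upwards [hle, hbound] with s h₁ h₂ using h₁.trans h₂
  · filter_upwards [hle, hγ'.2, hsupp] with s h₁ h₂ h₃ hs
    exact h₃ ((h₂.lt_of_ne (Ne.symm hs)).trans_le h₁).ne'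

theorem IsSCDE.of_UDev_subset {α : Type*} [Preorder α] {t0 tf : ℝ}
    {Psi : (P → ℝ → ℝ) → P → ℝ → α} {S : Set (P → ℝ → ℝ)}
    {A A' : (P → ℝ → ℝ) → P → Set (P × (ℝ → ℝ) × ℝ)} {h : P → ℝ → ℝ}
    (hSCDE : IsSCDE t0 tf Psi S A' h) (hsub : ∀ p t, UDev t0 tf A h p t ⊆ UDev t0 tf A' h p t) :
    IsSCDE t0 tf Psi S A h :=
  ⟨hSCDE.1, fun p t ht q Δ hU => hSCDE.2 p t ht q Δ (hsub p t hU)⟩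

theorem stmt6_general {I P : Type*} (t0 tf : ℝ) (comm : P → I) (B : P → ℝ)
    (Psi : (P → ℝ → ℝ) → P → ℝ → WithTop ℝ) (S : Set (P → ℝ → ℝ))
    (A A' : (P → ℝ → ℝ) → P → Set (P × (ℝ → ℝ) × ℝ))
    (hA' : ∀ h ∈ S, ∀ p, ∀ d ∈ A' h p, ValidTriple t0 tf comm B h p d.1 d.2.1 d.2.2)
    (hstar : P → ℝ → ℝ) (hmem : hstar ∈ S)
    (hcond : ∀ p q γ Δ, (q, γ, Δ) ∈ A hstar p →
      ¬ (γ =ᵐ[horizonMeasure t0 tf] (fun _ => (0:ℝ))) →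
      ∃ γ' : ℝ → ℝ, (q, γ', Δ) ∈ A' hstar p ∧
        ¬ (γ' =ᵐ[horizonMeasure t0 tf] (fun _ => (0:ℝ))) ∧
        ∀ᵐ t ∂(horizonMeasure t0 tf), γ' t ≤ γ t) :
    IsSCDE t0 tf Psi S A' hstar → IsSCDE t0 tf Psi S A hstar := fun hSCDE =>
  hSCDE.of_UDev_subset fun p t =>
    UDev_subset_of_refines t (fun d hd => (hA' hstar hmem p d hd).2.1) (hcond p)

theorem stmt6 {I P : Type*} [Fintype I] [Fintype P] [DecidableEq I]
    (t0 tf : ℝ) (ht0 : 0 ≤ t0) (htf : t0 < tf)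
    (comm : P → I) (hcomm : ∀ i, ∃ p, comm p = i)
    (B : P → ℝ) (hB : ∀ p, 0 ≤ B p)
    (Q : I → ℝ) (hQ : ∀ i, 0 ≤ Q i)
    (Psi : (P → ℝ → ℝ) → P → ℝ → WithTop ℝ)
    (S : Set (P → ℝ → ℝ)) (hS : S ⊆ LambdaQ t0 tf comm B Q)
    (A A' : (P → ℝ → ℝ) → P → Set (P × (ℝ → ℝ) × ℝ))
    (hA : ∀ h ∈ S, ∀ p, ∀ d ∈ A h p, ValidTriple t0 tf comm B h p d.1 d.2.1 d.2.2)
    (hA' : ∀ h ∈ S, ∀ p, ∀ d ∈ A' h p, ValidTriple t0 tf comm B h p d.1 d.2.1 d.2.2)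
    (hstar : P → ℝ → ℝ) (hmem : hstar ∈ S)
    (hcond : ∀ p q γ Δ, (q, γ, Δ) ∈ A hstar p →
      ¬ (γ =ᵐ[horizonMeasure t0 tf] (fun _ => (0:ℝ))) →
      ∃ γ' : ℝ → ℝ, (q, γ', Δ) ∈ A' hstar p ∧
        ¬ (γ' =ᵐ[horizonMeasure t0 tf] (fun _ => (0:ℝ))) ∧
        ∀ᵐ t ∂(horizonMeasure t0 tf), γ' t ≤ γ t) :
    IsSCDE t0 tf Psi S A' hstar → IsSCDE t0 tf Psi S A hstar :=
  stmt6_general t0 tf comm B Psi S A A' hA' hstar hmem hcond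

end
end

section
/- Let 𝒫' ⊆ 𝒫 be a dominating walk set, define A'_p(h) := {(q,γ,Δ) ∈ A_p(h) : q ∈ 𝒫'} and S' := {h ∈ S : h_p = 0 a.e. for all p ∈ 𝒫 ∖ 𝒫'}. Then any h* ∈ S' is a side-constrained dynamic equilibrium w.r.t. S' and (A'_p) if and only if it is a side-constrained dynamic equilibrium w.r.t. S and (A_p). -/
open MeasureTheory Filter Set

noncomputable section

variable {I P E : Type*}

/-! Restricting the admissible deviations only shrinks every `U_p`, so an equilibrium w.r.t.
`(S, A)` stays one w.r.t. `(S', A')`. Conversely, a dominating walk set lets every deviation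
`(q, Δ) ∈ U_p` be replaced by one into `𝒫'` that is at least as cheap, and such a deviation is
already admissible for `A'`. -/

section SideConstrainedRestriction

variable {P α : Type*} [Preorder α] {t0 tf : ℝ}

theorem UDev_mono {A A' : (P → ℝ → ℝ) → P → Set (P × (ℝ → ℝ) × ℝ)}
    (hA : ∀ h p, A' h p ⊆ A h p) (h : P → ℝ → ℝ) (p : P) (t : ℝ) :
    UDev t0 tf A' h p t ⊆ UDev t0 tf A h p t := by
  intro qd hqd δ hδ ε hε
  obtain ⟨γ, hγ, hpos, hle, hsupp, hmem⟩ := hqd δ hδ ε hε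
  exact ⟨γ, hγ, hpos, hle, hsupp, hA h p hmem⟩

theorem mem_UDev_restrict_iff (A : (P → ℝ → ℝ) → P → Set (P × (ℝ → ℝ) × ℝ)) (P' : Set P)
    (h : P → ℝ → ℝ) (p q : P) (t Δ : ℝ) :
    (q, Δ) ∈ UDev t0 tf (fun h p => {d | d ∈ A h p ∧ d.1 ∈ P'}) h p t ↔
      (q, Δ) ∈ UDev t0 tf A h p t ∧ q ∈ P' := by
  refine ⟨fun hU => ⟨UDev_mono (fun _ _ _ hd => hd.1) h p t hU, ?_⟩, ?_⟩
  · obtain ⟨_, -, -, -, -, hd⟩ := hU 1 one_pos 1 one_pos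
    exact hd.2
  · rintro ⟨hU, hq⟩ δ hδ ε hε
    obtain ⟨γ, hγ, hpos, hle, hsupp, hmem⟩ := hU δ hδ ε hε
    exact ⟨γ, hγ, hpos, hle, hsupp, hmem, hq⟩

theorem IsSCDE.anti {Psi : (P → ℝ → ℝ) → P → ℝ → α} {S S' : Set (P → ℝ → ℝ)}
    {A A' : (P → ℝ → ℝ) → P → Set (P × (ℝ → ℝ) × ℝ)} {h : P → ℝ → ℝ}
    (hE : IsSCDE t0 tf Psi S A h) (hS' : h ∈ S') (hA : ∀ h p, A' h p ⊆ A h p) :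
    IsSCDE t0 tf Psi S' A' h :=
  ⟨hS', fun p t ht q Δ hU => hE.2 p t ht q Δ (UDev_mono hA h p t hU)⟩

theorem IsSCDE.of_dominated {Psi : (P → ℝ → ℝ) → P → ℝ → α} {S S' : Set (P → ℝ → ℝ)}
    {A A' : (P → ℝ → ℝ) → P → Set (P × (ℝ → ℝ) × ℝ)} {h : P → ℝ → ℝ}
    (hE : IsSCDE t0 tf Psi S' A' h) (hS : h ∈ S)
    (hdom : ∀ p, ∀ t ∈ Icc t0 tf, ∀ q Δ, (q, Δ) ∈ UDev t0 tf A h p t →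
      ∃ q' Δ', (q', Δ') ∈ UDev t0 tf A' h p t ∧ Psi h q' (t + Δ') ≤ Psi h q (t + Δ)) :
    IsSCDE t0 tf Psi S A h := by
  refine ⟨hS, fun p t ht q Δ hU => ?_⟩
  obtain ⟨q', Δ', hU', hle⟩ := hdom p t ht q Δ hU
  exact (hE.2 p t ht q' Δ' hU').trans hle

end SideConstrainedRestriction

theorem stmt7_general {P : Type*}
    (t0 tf : ℝ)
    (Psi : (P → ℝ → ℝ) → P → ℝ → WithTop ℝ)
    (S : Set (P → ℝ → ℝ))
    (A : (P → ℝ → ℝ) → P → Set (P × (ℝ → ℝ) × ℝ))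
    (P' : Set P)
    (hdom : ∀ p, ∀ h ∈ S, ∀ t ∈ Icc t0 tf, ∀ q Δ, (q, Δ) ∈ UDev t0 tf A h p t →
      ∃ q' Δ', (q', Δ') ∈ UDev t0 tf A h p t ∧ q' ∈ P' ∧
        Psi h q' (t + Δ') ≤ Psi h q (t + Δ))
    (hstar : P → ℝ → ℝ)
    (hmem : hstar ∈ S ∧ ∀ p ∉ P', hstar p =ᵐ[horizonMeasure t0 tf] (fun _ => (0:ℝ))) :
    IsSCDE t0 tf Psi
        {h | h ∈ S ∧ ∀ p ∉ P', h p =ᵐ[horizonMeasure t0 tf] (fun _ => (0:ℝ))}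
        (fun h p => {d | d ∈ A h p ∧ d.1 ∈ P'}) hstar ↔
      IsSCDE t0 tf Psi S A hstar := by
  refine ⟨fun hE => hE.of_dominated hmem.1 fun p t ht q Δ hU => ?_,
    fun hE => hE.anti hmem fun _ _ _ hd => hd.1⟩
  obtain ⟨q', Δ', hU', hq', hle⟩ := hdom p hstar hmem.1 t ht q Δ hU
  exact ⟨q', Δ', (mem_UDev_restrict_iff A P' hstar p q' t Δ').2 ⟨hU', hq'⟩, hle⟩

theorem stmt7 {I P : Type*} [Fintype I] [Fintype P] [DecidableEq I]
    (t0 tf : ℝ) (ht0 : 0 ≤ t0) (htf : t0 < tf)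
    (comm : P → I) (hcomm : ∀ i, ∃ p, comm p = i)
    (B : P → ℝ) (hB : ∀ p, 0 ≤ B p)
    (Q : I → ℝ) (hQ : ∀ i, 0 ≤ Q i)
    (Psi : (P → ℝ → ℝ) → P → ℝ → WithTop ℝ)
    (S : Set (P → ℝ → ℝ)) (hS : S ⊆ LambdaQ t0 tf comm B Q)
    (A : (P → ℝ → ℝ) → P → Set (P × (ℝ → ℝ) × ℝ))
    (hA : ∀ h ∈ S, ∀ p, ∀ d ∈ A h p, ValidTriple t0 tf comm B h p d.1 d.2.1 d.2.2)
    (P' : Set P)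
    (hdom : ∀ p, ∀ h ∈ S, ∀ t ∈ Icc t0 tf, ∀ q Δ, (q, Δ) ∈ UDev t0 tf A h p t →
      ∃ q' Δ', (q', Δ') ∈ UDev t0 tf A h p t ∧ q' ∈ P' ∧
        Psi h q' (t + Δ') ≤ Psi h q (t + Δ))
    (hstar : P → ℝ → ℝ)
    (hmem : hstar ∈ S ∧ ∀ p ∉ P', hstar p =ᵐ[horizonMeasure t0 tf] (fun _ => (0:ℝ))) :
    IsSCDE t0 tf Psi
        {h | h ∈ S ∧ ∀ p ∉ P', h p =ᵐ[horizonMeasure t0 tf] (fun _ => (0:ℝ))}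
        (fun h p => {d | d ∈ A h p ∧ d.1 ∈ P'}) hstar ↔
      IsSCDE t0 tf Psi S A hstar :=
  stmt7_general t0 tf Psi S A P' hdom hstar hmem

end
end

section
/- Let M ∈ ℝ be such that for all h ∈ S, t ∈ [t₀,t_f] and p ∈ 𝒫 with U_p(h,t) ≠ ∅ there exists (q,Δ) ∈ U_p(h,t) with Ψ_q(h,t+Δ) < M. Then a walk inflow h* ∈ S is a side-constrained dynamic equilibrium w.r.t. the effective walk-delay operator Ψ if and only if it is a side-constrained dynamic equilibrium w.r.t. the truncated operator Ψ^M defined by Ψ^M_p(h,t) := min{Ψ_p(h,t), M} (with the same S and (A_p)). -/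
open MeasureTheory Filter Set

noncomputable section

variable {I P E : Type*}

section Truncation

variable {α : Type*} [LinearOrder α] {t0 tf : ℝ} {Psi : (P → ℝ → ℝ) → P → ℝ → α}
  {S : Set (P → ℝ → ℝ)} {A : (P → ℝ → ℝ) → P → Set (P × (ℝ → ℝ) × ℝ)} {h : P → ℝ → ℝ}

theorem le_of_min_le_min_of_min_le_of_lt {a b c m : α} (hab : min a m ≤ min b m)
    (hac : min a m ≤ c) (hcm : c < m) : a ≤ b := by
  have ham : a < m := by
    simpa only [min_lt_iff, lt_irrefl, or_false] using hac.trans_lt hcm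
  calc a = min a m := (min_eq_left ham.le).symm
    _ ≤ min b m := hab
    _ ≤ b := min_le_left b m

theorem IsSCDE.truncate (hh : IsSCDE t0 tf Psi S A h) (M : α) :
    IsSCDE t0 tf (fun h p t => min (Psi h p t) M) S A h :=
  ⟨hh.1, fun p t ht q Δ hqΔ => min_le_min_right M (hh.2 p t ht q Δ hqΔ)⟩

/-- Comparing `p` with a deviation whose delay is below `M` shows `Psi h p t < M`, and there
the truncation does not change the left-hand side of the equilibrium inequality. -/
theorem IsSCDE.of_truncate {M : α}
    (hh : IsSCDE t0 tf (fun h p t => min (Psi h p t) M) S A h)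
    (hM : ∀ t ∈ Icc t0 tf, ∀ p, (UDev t0 tf A h p t).Nonempty →
      ∃ q Δ, (q, Δ) ∈ UDev t0 tf A h p t ∧ Psi h q (t + Δ) < M) :
    IsSCDE t0 tf Psi S A h := by
  refine ⟨hh.1, fun p t ht q Δ hqΔ => ?_⟩
  obtain ⟨q', Δ', hq'Δ', hlt⟩ := hM t ht p ⟨(q, Δ), hqΔ⟩
  exact le_of_min_le_min_of_min_le_of_lt (hh.2 p t ht q Δ hqΔ)
    ((hh.2 p t ht q' Δ' hq'Δ').trans (min_le_left _ _)) hlt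

end Truncation

theorem stmt8_general {P : Type*}
    (t0 tf : ℝ)
    (Psi : (P → ℝ → ℝ) → P → ℝ → WithTop ℝ)
    (S : Set (P → ℝ → ℝ))
    (A : (P → ℝ → ℝ) → P → Set (P × (ℝ → ℝ) × ℝ))
    (M : ℝ)
    (hM : ∀ h ∈ S, ∀ t ∈ Icc t0 tf, ∀ p, (UDev t0 tf A h p t).Nonempty →
      ∃ q Δ, (q, Δ) ∈ UDev t0 tf A h p t ∧ Psi h q (t + Δ) < (M : WithTop ℝ))
    (hstar : P → ℝ → ℝ) :
    IsSCDE t0 tf Psi S A hstar ↔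
      IsSCDE t0 tf (fun h p t => min (Psi h p t) (M : WithTop ℝ)) S A hstar :=
  ⟨fun hh => hh.truncate _, fun hh => hh.of_truncate (hM hstar hh.1)⟩

theorem stmt8 {I P : Type*} [Fintype I] [Fintype P] [DecidableEq I]
    (t0 tf : ℝ) (ht0 : 0 ≤ t0) (htf : t0 < tf)
    (comm : P → I) (hcomm : ∀ i, ∃ p, comm p = i)
    (B : P → ℝ) (hB : ∀ p, 0 ≤ B p)
    (Q : I → ℝ) (hQ : ∀ i, 0 ≤ Q i)
    (Psi : (P → ℝ → ℝ) → P → ℝ → WithTop ℝ)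
    (S : Set (P → ℝ → ℝ)) (hS : S ⊆ LambdaQ t0 tf comm B Q)
    (A : (P → ℝ → ℝ) → P → Set (P × (ℝ → ℝ) × ℝ))
    (hA : ∀ h ∈ S, ∀ p, ∀ d ∈ A h p, ValidTriple t0 tf comm B h p d.1 d.2.1 d.2.2)
    (M : ℝ)
    (hM : ∀ h ∈ S, ∀ t ∈ Icc t0 tf, ∀ p, (UDev t0 tf A h p t).Nonempty →
      ∃ q Δ, (q, Δ) ∈ UDev t0 tf A h p t ∧ Psi h q (t + Δ) < (M : WithTop ℝ))
    (hstar : P → ℝ → ℝ) :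
    IsSCDE t0 tf Psi S A hstar ↔
      IsSCDE t0 tf (fun h p t => min (Psi h p t) (M : WithTop ℝ)) S A hstar :=
  stmt8_general t0 tf Psi S A M hM hstar

end
end
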